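/- arXiv:1106.6270 — 6 statements merged into one kernel-verified Lean document; each statement's English description precedes it below -/
import Mathlib

section
/- For every integer k ≥ 4, the sum ∑_{i=2}^{k-2} k(k-1)/(i(i-1)(k-i)(k-i-1)) is at most 9/2. -/
/-!
Writing `b = k - i`, the summand `k(k-1)/(i(i-1)b(b-1))` splits into partial fractions as
`g i + g b` with `g a = 1/(a(a-1)) + 2/((k-2)(a-1))`. Since `i ↦ k - i` permutes `[2, k-2]`, the
sum is `2 ∑ g`. The first part of `g` telescopes to `1 - 1/(k-2)`, and the harmonic part is
at most `(k-2)/2` because all its terms but the first are at most `1/2`; hence the sum is at most `4`.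
-/

open Finset

theorem sum_Icc_comp_sub {M : Type*} [AddCommMonoid M] (f : ℕ → M) {a b k : ℕ} (h : a + b = k) :
    ∑ i ∈ Icc a b, f (k - i) = ∑ i ∈ Icc a b, f i := by
  refine sum_nbij' (k - ·) (k - ·) ?_ ?_ ?_ ?_ (fun _ _ ↦ rfl) <;> intro i hi <;>
    simp only [mem_Icc] at hi ⊢ <;> omega

theorem add_mul_add_sub_one_div_eq {K : Type*} [Field K] {a b : K} (ha₀ : a ≠ 0)
    (ha₁ : a - 1 ≠ 0) (hb₀ : b ≠ 0) (hb₁ : b - 1 ≠ 0) (hab : a + b - 2 ≠ 0) :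
    (a + b) * (a + b - 1) / (a * (a - 1) * b * (b - 1)) =
      (1 / (a * (a - 1)) + 2 / (a + b - 2) * (1 / (a - 1))) +
        (1 / (b * (b - 1)) + 2 / (a + b - 2) * (1 / (b - 1))) := by
  field_simp
  ring

variable {K : Type*} [Field K] [LinearOrder K] [IsStrictOrderedRing K]

theorem sum_Icc_one_div_mul_sub_one {n : ℕ} (hn : 1 ≤ n) :
    ∑ a ∈ Icc 2 n, 1 / ((a : K) * (a - 1)) = 1 - 1 / n := by
  induction n, hn using Nat.le_induction with
  | base => simp
  | succ n hn ih =>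
    rw [sum_Icc_succ_top (by omega), ih]
    have : (n : K) ≠ 0 := by positivity
    push_cast
    rw [add_sub_cancel_right]
    field_simp
    ring

theorem sum_Icc_one_div_sub_one_le (n : ℕ) :
    ∑ a ∈ Icc 2 n, 1 / ((a : K) - 1) ≤ n / 2 := by
  rcases Nat.lt_or_ge n 2 with hn | hn
  · rw [Icc_eq_empty (by omega), sum_empty]
    positivity
  induction n, hn using Nat.le_induction with
  | base => norm_num
  | succ n hn ih =>
    rw [sum_Icc_succ_top (by omega)]
    have hn' : (2 : K) ≤ n := by exact_mod_cast hn
    have : 1 / ((n + 1 : ℕ) - 1 : K) ≤ 1 / 2 := by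
      push_cast
      rw [add_sub_cancel_right]
      exact one_div_le_one_div_of_le two_pos hn'
    push_cast at this ⊢
    linarith

theorem sum_Icc_partial_fraction_le {n : ℕ} (hn : 1 ≤ n) :
    ∑ a ∈ Icc 2 n, (1 / ((a : K) * (a - 1)) + 2 / n * (1 / ((a : K) - 1))) ≤ 2 := by
  have hn₀ : (0 : K) < n := by exact_mod_cast hn
  rw [sum_add_distrib, ← mul_sum, sum_Icc_one_div_mul_sub_one hn]
  calc 1 - 1 / (n : K) + 2 / n * ∑ a ∈ Icc 2 n, 1 / ((a : K) - 1)
      ≤ 1 - 1 / n + 2 / n * (n / 2) := by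
        gcongr
        exact sum_Icc_one_div_sub_one_le n
    _ ≤ 2 := by
        have : 2 / (n : K) * (n / 2) = 1 := by field_simp
        linarith [one_div_pos.2 hn₀]

theorem stmt_0 (k : ℕ) (hk : 4 ≤ k) :
    ∑ i ∈ Finset.Icc 2 (k - 2),
      ((k : ℚ) * ((k : ℚ) - 1)) /
        ((i : ℚ) * ((i : ℚ) - 1) * ((k : ℚ) - (i : ℚ)) * ((k : ℚ) - (i : ℚ) - 1))
      ≤ 9 / 2 := by
  set g : ℕ → ℚ := fun a => 1 / ((a : ℚ) * (a - 1)) + 2 / (k - 2 : ℕ) * (1 / ((a : ℚ) - 1))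
  have hsplit : ∀ i ∈ Icc 2 (k - 2),
      (k : ℚ) * (k - 1) / (i * (i - 1) * (k - i) * (k - i - 1)) = g i + g (k - i) := by
    intro i hi
    rw [mem_Icc] at hi
    have hi₂ : (2 : ℚ) ≤ i := by exact_mod_cast hi.1
    have hki : (i : ℚ) + 2 ≤ k := by exact_mod_cast (by omega : i + 2 ≤ k)
    have hpf := add_mul_add_sub_one_div_eq (a := (i : ℚ)) (b := k - i) (by linarith) (by linarith)
      (by linarith) (by linarith) (by linarith)
    simp only [g, Nat.cast_sub (by omega : 2 ≤ k), Nat.cast_sub (by omega : i ≤ k), Nat.cast_ofNat]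
    rwa [add_sub_cancel] at hpf
  rw [sum_congr rfl hsplit, sum_add_distrib, sum_Icc_comp_sub g (by omega)]
  linarith [sum_Icc_partial_fraction_le (K := ℚ) (n := k - 2) (by omega)]
end

section
/- If a sequence (a_K)_{K≥3} of nonnegative reals satisfies a_K ≤ C₀ for K ≤ 5 and, for k ≥ 4, a_{k+3} ≤ 12·∑_{i=2}^{k-2} C(k,i)·a_{i+3}·a_{k-i+3} + 24k·a₄·a_{k+2}, then for C sufficiently large (depending only on C₀), a_K ≤ C^{K-4}·(K-5)! for all K ≥ 5. -/
/-!
Since `C(k,i) (i-2)! (k-i-2)! = k! / (i(i-1)(k-i)(k-i-1))` and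
`k(k-1) ≤ 4 (i(i-1) + (k-i)(k-i-1))`, each such term is at most
`4 (k-2)! (1/(i(i-1)) + 1/((k-i)(k-i-1)))`; as `∑ 1/(i(i-1))` telescopes to at most `1`,
`∑_{i=2}^{k-2} C(k,i) (i-2)! (k-i-2)! ≤ 8 (k-2)!`. Feeding the bound `a_K ≤ C^(K-4) (K-5)!`
into the recursion, the quadratic part contributes at most `96 C^(k-2) (k-2)!` and, as `k ≤ 2(k-2)`,
the linear part at most `48 C₀ C^(k-2) (k-2)!`, which `C ≥ 96 + 48 C₀` absorbs into
`C^(k-1) (k-2)!`. The recursion only starts at `K = 7`, so `a 6 ≤ C` is needed as well.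
-/

open Finset Nat

theorem sum_Icc_two_inv_mul_sub_one_le (m : ℕ) :
    ∑ i ∈ Icc 2 m, ((i : ℝ) * (i - 1))⁻¹ ≤ 1 - (m : ℝ)⁻¹ := by
  induction m with
  | zero => simp
  | succ n ih =>
    rcases Nat.eq_zero_or_pos n with rfl | hn
    · simp
    rw [sum_Icc_succ_top (by omega)]
    have hn' : (0 : ℝ) < n := by exact_mod_cast hn
    have htel : (((n + 1 : ℕ) : ℝ) * ((n + 1 : ℕ) - 1))⁻¹
        = (n : ℝ)⁻¹ - ((n + 1 : ℕ) : ℝ)⁻¹ := by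
      push_cast
      field_simp [hn'.ne']
      ring
    linarith

theorem choose_mul_factorial_mul_factorial_add_two (p q : ℕ) :
    (p + q + 4).choose (p + 2) * p ! * q ! * ((p + 2) * (p + 1) * ((q + 2) * (q + 1)))
      = (p + q + 4) * (p + q + 3) * (p + q + 2)! := by
  have h := Nat.choose_mul_factorial_mul_factorial (Nat.le_add_right (p + 2) (q + 2))
  rw [Nat.add_sub_cancel_left, show p + 2 + (q + 2) = p + q + 2 + 1 + 1 by ring] at h
  rw [show p + q + 4 = p + q + 2 + 1 + 1 by ring]
  simp only [Nat.factorial_succ] at h ⊢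
  linarith

theorem choose_mul_factorial_sub_two_le {k i : ℕ} (hi : 2 ≤ i) (hik : i + 2 ≤ k) :
    (k.choose i * (i - 2)! * (k - i - 2)! : ℝ)
      ≤ 4 * (k - 2)! *
        (((i : ℝ) * (i - 1))⁻¹ + (((k - i : ℕ) : ℝ) * ((k - i : ℕ) - 1))⁻¹) := by
  obtain ⟨p, rfl⟩ : ∃ p, i = p + 2 := ⟨i - 2, by omega⟩
  obtain ⟨q, rfl⟩ : ∃ q, k = p + q + 4 := ⟨k - p - 4, by omega⟩
  rw [show p + q + 4 - (p + 2) - 2 = q by omega, show p + q + 4 - (p + 2) = q + 2 by omega,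
    show p + 2 - 2 = p by omega, show p + q + 4 - 2 = p + q + 2 by omega]
  have h := congrArg (Nat.cast : ℕ → ℝ) (choose_mul_factorial_mul_factorial_add_two p q)
  push_cast at h ⊢
  have hf : (0 : ℝ) ≤ (p + q + 2)! := by positivity
  rw [show (p : ℝ) + 2 - 1 = p + 1 by ring, show (q : ℝ) + 2 - 1 = q + 1 by ring,
    inv_add_inv (by positivity) (by positivity), mul_div_assoc', le_div_iff₀ (by positivity)]
  nlinarith [mul_nonneg hf (sq_nonneg ((p : ℝ) - q)),
    mul_nonneg hf (Nat.cast_nonneg (α := ℝ) p), mul_nonneg hf (Nat.cast_nonneg (α := ℝ) q)]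

theorem sum_choose_mul_factorial_sub_two_le (k : ℕ) :
    ∑ i ∈ Icc 2 (k - 2), (k.choose i * (i - 2)! * (k - i - 2)! : ℝ) ≤ 8 * (k - 2)! := by
  set g : ℕ → ℝ := fun i ↦ ((i : ℝ) * (i - 1))⁻¹
  have hinvol : ∀ i ∈ Icc 2 (k - 2), k - i ∈ Icc 2 (k - 2) ∧ k - (k - i) = i := by
    intro i hi
    rw [mem_Icc] at hi ⊢
    omega
  have hreflect : ∑ i ∈ Icc 2 (k - 2), g (k - i) = ∑ i ∈ Icc 2 (k - 2), g i :=
    sum_nbij' (k - ·) (k - ·) (fun i hi ↦ (hinvol i hi).1) (fun i hi ↦ (hinvol i hi).1)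
      (fun i hi ↦ (hinvol i hi).2) (fun i hi ↦ (hinvol i hi).2) fun _ _ ↦ rfl
  have hg : ∑ i ∈ Icc 2 (k - 2), g i ≤ 1 :=
    (sum_Icc_two_inv_mul_sub_one_le _).trans (by simp)
  calc _ ≤ ∑ i ∈ Icc 2 (k - 2), 4 * (k - 2)! * (g i + g (k - i)) :=
        sum_le_sum fun i hi ↦ choose_mul_factorial_sub_two_le (mem_Icc.1 hi).1
          (by have := mem_Icc.1 hi; omega)
    _ = 4 * (k - 2)! * (∑ i ∈ Icc 2 (k - 2), g i + ∑ i ∈ Icc 2 (k - 2), g (k - i)) := by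
        rw [← mul_sum, sum_add_distrib]
    _ ≤ 4 * (k - 2)! * (1 + 1) := by rw [hreflect]; gcongr
    _ = _ := by ring

section Recursion

variable {C₀ C : ℝ} {a : ℕ → ℝ}

theorem sum_choose_mul_le_of_le_pow_mul_factorial {k : ℕ} (hC : 0 ≤ C)
    (hnonneg : ∀ K, 3 ≤ K → 0 ≤ a K)
    (IH : ∀ j, 5 ≤ j → j < k + 3 → a j ≤ C ^ (j - 4) * (j - 5)!) :
    ∑ i ∈ Icc 2 (k - 2), (k.choose i : ℝ) * a (i + 3) * a (k - i + 3)
      ≤ 8 * C ^ (k - 2) * (k - 2)! := by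
  calc _ ≤ ∑ i ∈ Icc 2 (k - 2),
          C ^ (k - 2) * (k.choose i * (i - 2)! * (k - i - 2)! : ℝ) := by
        refine sum_le_sum fun i hi ↦ ?_
        obtain ⟨hi2, hik⟩ := mem_Icc.1 hi
        have hleft := IH (i + 3) (by omega) (by omega)
        have hright := IH (k - i + 3) (by omega) (by omega)
        rw [show i + 3 - 4 = i - 1 by omega, show i + 3 - 5 = i - 2 by omega] at hleft
        rw [show k - i + 3 - 4 = k - i - 1 by omega, show k - i + 3 - 5 = k - i - 2 by omega]
          at hright
        have hpow : C ^ (k - 2) = C ^ (i - 1) * C ^ (k - i - 1) := by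
          rw [← pow_add]; congr 1; omega
        calc (k.choose i : ℝ) * a (i + 3) * a (k - i + 3)
            ≤ k.choose i * (C ^ (i - 1) * (i - 2)!) * (C ^ (k - i - 1) * (k - i - 2)!) := by
              gcongr
              exact hnonneg _ (by omega)
          _ = _ := by rw [hpow]; ring
    _ = C ^ (k - 2) * ∑ i ∈ Icc 2 (k - 2), (k.choose i * (i - 2)! * (k - i - 2)! : ℝ) :=
        (mul_sum ..).symm
    _ ≤ C ^ (k - 2) * (8 * (k - 2)!) := by
        gcongr; exact sum_choose_mul_factorial_sub_two_le k
    _ = _ := by ring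

theorem le_pow_mul_factorial_of_rec_step {k : ℕ} (hk : 4 ≤ k) (hC : 96 + 48 * C₀ ≤ C)
    (hnonneg : ∀ K, 3 ≤ K → 0 ≤ a K) (ha4 : a 4 ≤ C₀)
    (hrec : a (k + 3)
      ≤ 12 * ∑ i ∈ Icc 2 (k - 2), (k.choose i : ℝ) * a (i + 3) * a (k - i + 3)
        + 24 * (k : ℝ) * a 4 * a (k + 2))
    (IH : ∀ j, 5 ≤ j → j < k + 3 → a j ≤ C ^ (j - 4) * (j - 5)!) :
    a (k + 3) ≤ C ^ (k - 1) * (k - 2)! := by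
  have hC₀ : 0 ≤ C₀ := (hnonneg 4 (by norm_num)).trans ha4
  have hsum := sum_choose_mul_le_of_le_pow_mul_factorial (by linarith) hnonneg IH
  have hprev := IH (k + 2) (by omega) (by omega)
  obtain ⟨n, rfl⟩ : ∃ n, k = n + 4 := ⟨k - 4, by omega⟩
  rw [show n + 4 + 2 - 4 = n + 2 by omega, show n + 4 + 2 - 5 = n + 1 by omega] at hprev
  rw [show n + 4 - 2 = n + 2 by omega] at hsum hrec
  rw [show n + 4 - 1 = n + 2 + 1 by omega, show n + 4 - 2 = n + 2 by omega]
  have hlast : a 4 * a (n + 4 + 2) ≤ C₀ * (C ^ (n + 2) * (n + 1)!) :=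
    mul_le_mul ha4 hprev (hnonneg _ (by omega)) hC₀
  have hB : (0 : ℝ) ≤ C ^ (n + 2) * (n + 1)! := by
    have : 0 ≤ C := by linarith
    positivity
  calc a (n + 4 + 3)
      ≤ 12 * (8 * C ^ (n + 2) * (n + 2)!)
        + 24 * ((n + 4 : ℕ) : ℝ) * (C₀ * (C ^ (n + 2) * (n + 1)!)) := by
        have h24 : (0 : ℝ) ≤ 24 * ((n + 4 : ℕ) : ℝ) := by positivity
        linarith [mul_le_mul_of_nonneg_left hlast h24]
    _ = (96 * (n + 2) + 24 * (n + 4) * C₀) * (C ^ (n + 2) * (n + 1)!) := by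
        push_cast [Nat.factorial_succ]; ring
    _ ≤ C * (n + 2) * (C ^ (n + 2) * (n + 1)!) := by
        gcongr
        nlinarith
    _ = C ^ (n + 2 + 1) * (n + 2)! := by
        push_cast [Nat.factorial_succ]; ring

theorem le_pow_mul_factorial_of_rec (hC : 96 + 48 * C₀ ≤ C) (ha6 : a 6 ≤ C)
    (hnonneg : ∀ K, 3 ≤ K → 0 ≤ a K) (hsmall : ∀ K, 3 ≤ K → K ≤ 5 → a K ≤ C₀)
    (hrec : ∀ k, 4 ≤ k →
      a (k + 3) ≤ 12 * ∑ i ∈ Icc 2 (k - 2), (k.choose i : ℝ) * a (i + 3) * a (k - i + 3)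
        + 24 * (k : ℝ) * a 4 * a (k + 2)) (K : ℕ) (hK : 5 ≤ K) :
    a K ≤ C ^ (K - 4) * (K - 5)! := by
  have hC₀ : 0 ≤ C₀ := (hnonneg 3 le_rfl).trans (hsmall 3 le_rfl (by norm_num))
  induction K using Nat.strong_induction_on with
  | _ K IH =>
    rcases (show K = 5 ∨ K = 6 ∨ 7 ≤ K by omega) with rfl | rfl | hK7
    · simpa using (hsmall 5 (by norm_num) le_rfl).trans (by linarith)
    · norm_num
      nlinarith
    · obtain ⟨k, rfl⟩ : ∃ k, K = k + 3 := ⟨K - 3, by omega⟩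
      rw [show k + 3 - 4 = k - 1 by omega, show k + 3 - 5 = k - 2 by omega]
      exact le_pow_mul_factorial_of_rec_step (by omega) hC hnonneg
        (hsmall 4 (by norm_num) (by norm_num)) (hrec k (by omega)) fun j hj hjk ↦ IH j hjk hj

end Recursion

theorem stmt_5 (C₀ : ℝ) (a : ℕ → ℝ)
    (hnonneg : ∀ K, 3 ≤ K → 0 ≤ a K)
    (hsmall : ∀ K, 3 ≤ K → K ≤ 5 → a K ≤ C₀)
    (hrec : ∀ k, 4 ≤ k →
      a (k + 3) ≤ 12 * ∑ i ∈ Finset.Icc 2 (k - 2), (k.choose i : ℝ) * a (i + 3) * a (k - i + 3)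
        + 24 * (k : ℝ) * a 4 * a (k + 2)) :
    ∃ C₁ : ℝ, ∀ C : ℝ, C₁ ≤ C → ∀ K, 5 ≤ K →
      a K ≤ C ^ (K - 4) * ((K - 5).factorial : ℝ) :=
  ⟨max (96 + 48 * C₀) (a 6), fun _ hC ↦
    le_pow_mul_factorial_of_rec (le_of_max_le_left hC) (le_of_max_le_right hC) hnonneg hsmall hrec⟩
end

section
/- In the Milnor ring of the miniversal deformation P₈(s,x) = x³+y³+z³+s₋₁xyz (setting all other deformation parameters to zero), the Hessian determinant of P₈(s,x) is congruent to (216 + 8s₋₁³)·xyz modulo the Jacobian ideal generated by (3x² + s₋₁yz, 3y² + s₋₁xz, 3z² + s₋₁xy). -/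
open MvPolynomial

set_option maxHeartbeats 1000000 in
/-- In the Milnor ring of `P₈(s,x) = x³+y³+z³+s·xyz`, the Hessian determinant is
congruent to `(216 + 8s³)·xyz` modulo the Jacobian ideal
`(3x²+s·yz, 3y²+s·xz, 3z²+s·xy)`. -/
theorem stmt_10 (s : ℂ) :
    ∀ W : MvPolynomial (Fin 3) ℂ,
      W = X 0 ^ 3 + X 1 ^ 3 + X 2 ^ 3 + C s * (X 0 * X 1 * X 2) →
      ∀ J : Ideal (MvPolynomial (Fin 3) ℂ),
        J = Ideal.span {pderiv 0 W, pderiv 1 W, pderiv 2 W} →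
        Ideal.Quotient.mk J (Matrix.det (Matrix.of fun i j : Fin 3 => pderiv i (pderiv j W)))
          = Ideal.Quotient.mk J (C (216 + 8 * s ^ 3) * (X 0 * X 1 * X 2)) := by
  intro W hW J hJ
  have hp0 : pderiv 0 W = C 3 * X 0 ^ 2 + C s * (X 1 * X 2) := by
    subst hW
    simp [pderiv_X, pow_succ, map_ofNat]
    ring
  have hp1 : pderiv 1 W = C 3 * X 1 ^ 2 + C s * (X 0 * X 2) := by
    subst hW
    simp [pderiv_X, pow_succ, map_ofNat]
    ring
  have hp2 : pderiv 2 W = C 3 * X 2 ^ 2 + C s * (X 0 * X 1) := by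
    subst hW
    simp [pderiv_X, pow_succ, map_ofNat]
    ring
  subst hJ
  rw [Ideal.Quotient.eq]
  have key : Matrix.det (Matrix.of fun i j : Fin 3 => pderiv i (pderiv j W))
      - C (216 + 8 * s ^ 3) * (X 0 * X 1 * X 2)
    = (C (-2 * s ^ 2) * X 0) * pderiv 0 W
      + (C (-2 * s ^ 2) * X 1) * pderiv 1 W
      + (C (-2 * s ^ 2) * X 2) * pderiv 2 W := by
    rw [Matrix.det_fin_three]
    simp only [Matrix.of_apply, hp0, hp1, hp2]
    simp [pderiv_X, pow_succ]
    simp only [map_ofNat]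
    ring
  rw [key]
  refine Ideal.add_mem _ (Ideal.add_mem _ ?_ ?_) ?_ <;>
    exact Ideal.mul_mem_left _ _ (Ideal.subset_span (by simp))
end

section
/- For real C₀ ≥ 1 and sufficiently large C (e.g., C ≥ 4C₀ + 4C₀²), if nonnegative reals satisfy I_{1,m} ≤ C^m·m! for m ≤ k+1 and I_{0,j} ≤ C₀ for j ≤ 4, I_{0,j} ≤ C^{j-4}(j-5)! for j ≥ 5, then 4·∑_{i=0}^{k} C(k,i)·I_{1,i+1}·C₀·I_{0,k-i+4} ≤ C^{k+2}·(k+2)!. -/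
/-!
Each summand is bounded by `C₀² C^{k+1} (k+1)!`: the binomial coefficient cancels against the
factorials, since `C(k,i) (i+1)! (k-i)! = (i+1) k! ≤ (k+1)!`. There are `k+1` summands, and
`4 (k+1) C₀² ≤ (k+2) C` absorbs them into `C^{k+2} (k+2)!`.
-/

open Nat

theorem Nat.choose_mul_factorial_succ_mul_factorial_sub_le {k i : ℕ} (hik : i ≤ k) :
    k.choose i * (i + 1)! * (k - i)! ≤ (k + 1)! := by
  calc k.choose i * (i + 1)! * (k - i)! = (i + 1) * (k.choose i * i ! * (k - i)!) := by
        rw [factorial_succ]; ring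
    _ = (i + 1) * k ! := by rw [choose_mul_factorial_mul_factorial hik]
    _ ≤ (k + 1) * k ! := by gcongr
    _ = (k + 1)! := (factorial_succ k).symm

theorem le_mul_pow_mul_factorial_of_le_add_four {C₀ C : ℝ} (hC₀ : 1 ≤ C₀) (hC : 0 ≤ C)
    {I0 : ℕ → ℝ} (hI0a : I0 4 ≤ C₀)
    (hI0b : ∀ j, 5 ≤ j → I0 j ≤ C ^ (j - 4) * ((j - 5)! : ℝ)) (n : ℕ) :
    I0 (n + 4) ≤ C₀ * (C ^ n * (n ! : ℝ)) := by
  rcases n with _ | n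
  · simpa using hI0a
  · calc I0 (n + 1 + 4) ≤ C ^ (n + 1) * (n ! : ℝ) := by
          simpa using hI0b (n + 1 + 4) (by omega)
      _ ≤ C ^ (n + 1) * ((n + 1)! : ℝ) := by gcongr; exact le_succ n
      _ ≤ C₀ * (C ^ (n + 1) * ((n + 1)! : ℝ)) := le_mul_of_one_le_left (by positivity) hC₀

theorem choose_mul_mul_mul_le_of_le {C₀ C a b : ℝ} (hC₀ : 0 ≤ C₀) (hC : 0 ≤ C) {k i : ℕ}
    (hik : i ≤ k) (hb : 0 ≤ b) (ha_le : a ≤ C ^ (i + 1) * ((i + 1)! : ℝ))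
    (hb_le : b ≤ C₀ * (C ^ (k - i) * ((k - i)! : ℝ))) :
    (k.choose i : ℝ) * a * C₀ * b ≤ C₀ ^ 2 * (C ^ (k + 1) * ((k + 1)! : ℝ)) := by
  have hcomb : ((k.choose i * (i + 1)! * (k - i)! : ℕ) : ℝ) ≤ ((k + 1)! : ℝ) := by
    exact_mod_cast choose_mul_factorial_succ_mul_factorial_sub_le hik
  calc (k.choose i : ℝ) * a * C₀ * b
      ≤ (k.choose i : ℝ) * (C ^ (i + 1) * ((i + 1)! : ℝ)) * C₀
          * (C₀ * (C ^ (k - i) * ((k - i)! : ℝ))) := by gcongr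
    _ = C₀ ^ 2 * (C ^ (i + 1 + (k - i)) * ((k.choose i * (i + 1)! * (k - i)! : ℕ) : ℝ)) := by
        push_cast; ring
    _ ≤ C₀ ^ 2 * (C ^ (k + 1) * ((k + 1)! : ℝ)) := by
        rw [show i + 1 + (k - i) = k + 1 by omega]; gcongr

theorem stmt_14_general (C₀ C : ℝ) (hC₀ : 1 ≤ C₀) (hC : 4 * C₀ + 4 * C₀ ^ 2 ≤ C)
    (k : ℕ) (I1 I0 : ℕ → ℝ)
    (hI0nonneg : ∀ j, 0 ≤ I0 j)
    (hI1 : ∀ m, m ≤ k + 1 → I1 m ≤ C ^ m * (m.factorial : ℝ))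
    (hI0a : ∀ j, j ≤ 4 → I0 j ≤ C₀)
    (hI0b : ∀ j, 5 ≤ j → I0 j ≤ C ^ (j - 4) * ((j - 5).factorial : ℝ)) :
    4 * ∑ i ∈ Finset.range (k + 1),
        (k.choose i : ℝ) * I1 (i + 1) * C₀ * I0 (k - i + 4)
      ≤ C ^ (k + 2) * ((k + 2).factorial : ℝ) := by
  have hC0 : 0 ≤ C := by nlinarith
  set B := C ^ (k + 1) * ((k + 1)! : ℝ)
  have hsum :
      ∑ i ∈ Finset.range (k + 1), (k.choose i : ℝ) * I1 (i + 1) * C₀ * I0 (k - i + 4)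
        ≤ (k + 1) * (C₀ ^ 2 * B) := by
    calc _ ≤ ∑ _i ∈ Finset.range (k + 1), C₀ ^ 2 * B := by
          refine Finset.sum_le_sum fun i hi => ?_
          have hik : i ≤ k := Finset.mem_range_succ_iff.mp hi
          exact choose_mul_mul_mul_le_of_le (by positivity) hC0 hik (hI0nonneg _)
            (hI1 _ (by omega))
            (le_mul_pow_mul_factorial_of_le_add_four hC₀ hC0 (hI0a 4 le_rfl) hI0b _)
      _ = (k + 1) * (C₀ ^ 2 * B) := by simp
  have hB : 0 ≤ B := by positivity
  have hconst : 4 * (k + 1) * C₀ ^ 2 ≤ C * (k + 2) := by nlinarith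
  calc _ ≤ 4 * ((k + 1) * (C₀ ^ 2 * B)) := by gcongr
    _ = 4 * (k + 1) * C₀ ^ 2 * B := by ring
    _ ≤ C * (k + 2) * B := by gcongr
    _ = C ^ (k + 2) * ((k + 2)! : ℝ) := by
        simp only [B, pow_succ, factorial_succ (k + 1)]; push_cast; ring

theorem stmt_14 (C₀ C : ℝ) (hC₀ : 1 ≤ C₀) (hC : 4 * C₀ + 4 * C₀ ^ 2 ≤ C)
    (k : ℕ) (I1 I0 : ℕ → ℝ)
    (hI1nonneg : ∀ m, 0 ≤ I1 m) (hI0nonneg : ∀ j, 0 ≤ I0 j)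
    (hI1 : ∀ m, m ≤ k + 1 → I1 m ≤ C ^ m * (m.factorial : ℝ))
    (hI0a : ∀ j, j ≤ 4 → I0 j ≤ C₀)
    (hI0b : ∀ j, 5 ≤ j → I0 j ≤ C ^ (j - 4) * ((j - 5).factorial : ℝ)) :
    4 * ∑ i ∈ Finset.range (k + 1),
        (k.choose i : ℝ) * I1 (i + 1) * C₀ * I0 (k - i + 4)
      ≤ C ^ (k + 2) * ((k + 2).factorial : ℝ) :=
  stmt_14_general C₀ C hC₀ hC k I1 I0 hI0nonneg hI1 hI0a hI0b
end

section
/- For integers n ≥ 2 and d ≥ 1 and real C > 0, ∑_{i=1}^{d-1} ∑_{j=0}^{n} C(n,j)·(d-i)^{j-2}·i^{n-j-2}·C^{n+d-2} ≤ 8·d^{n-2}·C^{n+d-2}, where terms with exponent base (d-i) or i raised to a negative power are interpreted as real powers. -/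
/-!
For fixed `i`, the inner sum is a binomial expansion: it equals
`d ^ n / ((d - i) ^ 2 * i ^ 2)`. Writing `1 / (i (d - i)) = (1 / i + 1 / (d - i)) / d` and using
`(a + b) ^ 2 ≤ 2 (a ^ 2 + b ^ 2)`, the remaining sum over `i` is at most
`2 / d ^ 2` times two copies of `∑ 1 / i ^ 2 ≤ 2`, which gives the constant `8`.
-/

open Finset

lemma sum_choose_mul_zpow_sub_two_eq {K : Type*} [Field K] {a b : K} (ha : a ≠ 0) (hb : b ≠ 0)
    (n : ℕ) :
    ∑ j ∈ range (n + 1), (n.choose j : K) * a ^ ((j : ℤ) - 2) * b ^ ((n : ℤ) - (j : ℤ) - 2)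
      = (a + b) ^ n / (a ^ 2 * b ^ 2) := by
  rw [add_pow, sum_div]
  refine sum_congr rfl fun j hj => ?_
  have hjn : j ≤ n := Nat.lt_succ_iff.mp (mem_range.mp hj)
  have hnj : (n : ℤ) - (j : ℤ) - 2 = ((n - j : ℕ) : ℤ) - 2 := by push_cast [hjn]; ring
  rw [hnj, zpow_sub₀ ha, zpow_sub₀ hb, zpow_natCast, zpow_natCast]
  field_simp

lemma inv_sq_mul_inv_sq_le {K : Type*} [Field K] [LinearOrder K] [IsStrictOrderedRing K]
    {x y : K} (hx : 0 < x) (hy : 0 < y) :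
    (x ^ 2 * y ^ 2)⁻¹ ≤ 2 / (x + y) ^ 2 * ((x ^ 2)⁻¹ + (y ^ 2)⁻¹) := by
  rw [inv_add_inv (by positivity) (by positivity), div_mul_div_comm, inv_eq_one_div,
    div_le_div_iff₀ (by positivity) (by positivity)]
  nlinarith [mul_nonneg (sq_nonneg (x - y)) (mul_nonneg (sq_nonneg x) (sq_nonneg y))]

lemma Finset.sum_Ioo_zero_reflect {M : Type*} [AddCommMonoid M] (f : ℕ → M) (d : ℕ) :
    ∑ i ∈ Ioo 0 d, f (d - i) = ∑ i ∈ Ioo 0 d, f i :=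
  sum_nbij' (d - ·) (d - ·) (by intro; simp only [mem_Ioo]; omega)
    (by intro; simp only [mem_Ioo]; omega) (by intro; simp only [mem_Ioo]; omega)
    (by intro; simp only [mem_Ioo]; omega) (fun _ _ => rfl)

lemma sum_Ioo_inv_sq_sub_mul_inv_sq_le (d : ℕ) :
    ∑ i ∈ Ioo 0 d, (((d : ℝ) - i) ^ 2 * (i : ℝ) ^ 2)⁻¹ ≤ 8 / (d : ℝ) ^ 2 := by
  have hreflect : ∑ i ∈ Ioo 0 d, (((d : ℝ) - i) ^ 2)⁻¹ = ∑ i ∈ Ioo 0 d, ((i : ℝ) ^ 2)⁻¹ := by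
    rw [← sum_Ioo_zero_reflect (fun i : ℕ => ((i : ℝ) ^ 2)⁻¹) d]
    refine sum_congr rfl fun i hi => ?_
    rw [Nat.cast_sub (mem_Ioo.mp hi).2.le]
  calc ∑ i ∈ Ioo 0 d, (((d : ℝ) - i) ^ 2 * (i : ℝ) ^ 2)⁻¹
      ≤ ∑ i ∈ Ioo 0 d, 2 / (d : ℝ) ^ 2 * ((((d : ℝ) - i) ^ 2)⁻¹ + ((i : ℝ) ^ 2)⁻¹) := by
        refine sum_le_sum fun i hi => ?_
        obtain ⟨hi0, hid⟩ := mem_Ioo.mp hi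
        have hsub : (0 : ℝ) < d - i := sub_pos.mpr (Nat.cast_lt.mpr hid)
        simpa using inv_sq_mul_inv_sq_le hsub (Nat.cast_pos.mpr hi0)
    _ = 2 / (d : ℝ) ^ 2 * (2 * ∑ i ∈ Ioo 0 d, ((i : ℝ) ^ 2)⁻¹) := by
        rw [← mul_sum, sum_add_distrib, hreflect, two_mul]
    _ ≤ 2 / (d : ℝ) ^ 2 * (2 * 2) := by
        gcongr
        simpa using sum_Ioo_inv_sq_le (α := ℝ) 0 d
    _ = 8 / (d : ℝ) ^ 2 := by ring

lemma sum_Icc_sum_choose_mul_zpow_le (n : ℕ) {d : ℕ} (hd : d ≠ 0) :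
    ∑ i ∈ Icc 1 (d - 1), ∑ j ∈ range (n + 1),
        (n.choose j : ℝ) * ((d : ℝ) - (i : ℝ)) ^ ((j : ℤ) - 2) * (i : ℝ) ^ ((n : ℤ) - (j : ℤ) - 2)
      ≤ 8 * (d : ℝ) ^ ((n : ℤ) - 2) := by
  have hd' : (d : ℝ) ≠ 0 := Nat.cast_ne_zero.mpr hd
  have hIcc : Icc 1 (d - 1) = Ioo 0 d := by ext; simp only [mem_Icc, mem_Ioo]; omega
  calc _ = ∑ i ∈ Ioo 0 d, (d : ℝ) ^ n * (((d : ℝ) - i) ^ 2 * (i : ℝ) ^ 2)⁻¹ := by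
        rw [hIcc]
        refine sum_congr rfl fun i hi => ?_
        obtain ⟨hi0, hid⟩ := mem_Ioo.mp hi
        rw [sum_choose_mul_zpow_sub_two_eq (sub_ne_zero.mpr (Nat.cast_lt.mpr hid).ne')
          (Nat.cast_ne_zero.mpr hi0.ne'), sub_add_cancel, div_eq_mul_inv]
    _ = (d : ℝ) ^ n * ∑ i ∈ Ioo 0 d, (((d : ℝ) - i) ^ 2 * (i : ℝ) ^ 2)⁻¹ := (mul_sum ..).symm
    _ ≤ (d : ℝ) ^ n * (8 / (d : ℝ) ^ 2) := by
        gcongr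
        exact sum_Ioo_inv_sq_sub_mul_inv_sq_le d
    _ = 8 * (d : ℝ) ^ ((n : ℤ) - 2) := by
        rw [zpow_sub₀ hd', zpow_natCast, zpow_two, sq]
        ring

theorem stmt_15_general (n d : ℕ) (C : ℝ) (hC : 0 < C) :
    ∑ i ∈ Finset.Icc 1 (d - 1), ∑ j ∈ Finset.range (n + 1),
        (n.choose j : ℝ) * ((d : ℝ) - (i : ℝ)) ^ ((j : ℤ) - 2) *
          (i : ℝ) ^ ((n : ℤ) - (j : ℤ) - 2) * C ^ (n + d - 2)
      ≤ 8 * (d : ℝ) ^ ((n : ℤ) - 2) * C ^ (n + d - 2) := by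
  simp only [← sum_mul]
  rcases eq_or_ne d 0 with rfl | hd
  · simp only [zero_tsub, Icc_eq_empty_of_lt zero_lt_one, sum_empty, zero_mul]
    positivity
  · exact mul_le_mul_of_nonneg_right (sum_Icc_sum_choose_mul_zpow_le n hd) (by positivity)

theorem stmt_15 (n d : ℕ) (hn : 2 ≤ n) (hd : 1 ≤ d) (C : ℝ) (hC : 0 < C) :
    ∑ i ∈ Finset.Icc 1 (d - 1), ∑ j ∈ Finset.range (n + 1),
        (n.choose j : ℝ) * ((d : ℝ) - (i : ℝ)) ^ ((j : ℤ) - 2) *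
          (i : ℝ) ^ ((n : ℤ) - (j : ℤ) - 2) * C ^ (n + d - 2)
      ≤ 8 * (d : ℝ) ^ ((n : ℤ) - 2) * C ^ (n + d - 2) :=
  stmt_15_general n d C hC
end

section
/- For integers L ≥ 1, d ≥ 1, and nonnegative integers χ₀,…,χ_L with ∑χᵢ = χ, the sum over compositions d₀+⋯+d_L = d of ∏_{dᵢ≠0} dᵢ^{χᵢ-2} is at most 8^L·d^{χ-2}, where negative exponents denote real powers of positive integers. -/
/-!
Put `w 0 = 1` and `w n = n⁻²` for `n ≥ 1`. Since every part satisfies `dᵢ ≤ d`, the claim reduces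
to `∑_{d₀+⋯+d_L = d} ∏ w(dᵢ) ≤ 8^L w(d)`, which follows by induction on `L` from the convolution
bound `∑_{a+b=n} w(a) w(b) ≤ 8 w(n)`. For `n ≥ 2` the two boundary terms give `2/n²`; for
`a, b ≥ 1` the partial fraction `1/(ab) = (1/a + 1/b)/n` gives
`1/(a²b²) = (1/a² + 1/b² + 2/(ab))/n²`, and `∑ 1/a² ≤ 2` together with `ab ≥ n - 1` bounds the
interior by `6/n²`.
-/

open Finset

theorem Finset.Nat.sum_antidiagonalTuple_succ {M : Type*} [AddCommMonoid M] (k n : ℕ)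
    (g : (Fin (k + 1) → ℕ) → M) :
    ∑ f ∈ Nat.antidiagonalTuple (k + 1) n, g f =
      ∑ p ∈ antidiagonal n, ∑ t ∈ Nat.antidiagonalTuple k p.2, g (Fin.cons p.1 t) := by
  change ((Multiset.Nat.antidiagonalTuple (k + 1) n).map g).sum =
    ((Multiset.Nat.antidiagonal n).map _).sum
  simp only [Multiset.Nat.antidiagonalTuple, Multiset.Nat.antidiagonal, Multiset.map_coe,
    Multiset.sum_coe, List.Nat.antidiagonalTuple, List.flatMap_def, List.map_flatten,
    List.sum_flatten, List.map_map]
  refine congrArg List.sum (List.map_congr_left fun p _ => ?_)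
  simp only [Function.comp_apply, List.map_map]
  rfl

theorem Finset.Nat.sum_antidiagonalTuple_prod_le {R : Type*} [CommSemiring R] [PartialOrder R]
    [IsOrderedRing R] {w : ℕ → R} {C : R} (hw : ∀ n, 0 ≤ w n) (hC : 0 ≤ C)
    (hconv : ∀ n, ∑ p ∈ antidiagonal n, w p.1 * w p.2 ≤ C * w n) (k n : ℕ) :
    ∑ f ∈ Nat.antidiagonalTuple (k + 1) n, ∏ i, w (f i) ≤ C ^ k * w n := by
  induction k generalizing n with
  | zero => simp
  | succ k ih =>
    calc ∑ f ∈ Nat.antidiagonalTuple (k + 2) n, ∏ i, w (f i)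
        = ∑ p ∈ antidiagonal n, w p.1 * ∑ t ∈ Nat.antidiagonalTuple (k + 1) p.2, ∏ i, w (t i) := by
          simp only [Nat.sum_antidiagonalTuple_succ, Fin.prod_univ_succ, Fin.cons_zero,
            Fin.cons_succ, mul_sum]
      _ ≤ ∑ p ∈ antidiagonal n, w p.1 * (C ^ k * w p.2) :=
          sum_le_sum fun p _ => mul_le_mul_of_nonneg_left (ih p.2) (hw p.1)
      _ = C ^ k * ∑ p ∈ antidiagonal n, w p.1 * w p.2 := by
          rw [mul_sum]; exact sum_congr rfl fun p _ => by ring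
      _ ≤ C ^ (k + 1) * w n := by
          rw [pow_succ, mul_assoc]; exact mul_le_mul_of_nonneg_left (hconv n) (pow_nonneg hC k)

theorem sum_range_inv_sq_succ_le_two {α : Type*} [Field α] [LinearOrder α] [IsStrictOrderedRing α]
    (m : ℕ) : ∑ i ∈ range m, (((i + 1 : ℕ) : α) ^ 2)⁻¹ ≤ 2 := by
  have h := sum_Ioo_inv_sq_le (α := α) 0 (m + 1)
  rw [← Ico_add_one_left_eq_Ioo, ← sum_Ico_add' (fun i : ℕ => ((i : α) ^ 2)⁻¹),
    ← range_eq_Ico] at h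
  simpa using h

theorem inv_sq_mul_inv_sq_eq {K : Type*} [Field K] {x y : K} (hx : x ≠ 0) (hy : y ≠ 0)
    (hxy : x + y ≠ 0) :
    (x ^ 2)⁻¹ * (y ^ 2)⁻¹ = ((x ^ 2)⁻¹ + (y ^ 2)⁻¹ + 2 * (x * y)⁻¹) / (x + y) ^ 2 := by
  field_simp
  ring

theorem sum_antidiagonal_inv_sq_succ_mul_le (m : ℕ) :
    ∑ p ∈ antidiagonal m, (((p.1 + 1 : ℕ) : ℝ) ^ 2)⁻¹ * (((p.2 + 1 : ℕ) : ℝ) ^ 2)⁻¹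
      ≤ 6 / ((m + 2 : ℕ) : ℝ) ^ 2 := by
  set g : ℕ → ℝ := fun i => (((i + 1 : ℕ) : ℝ) ^ 2)⁻¹
  have hpoint : ∀ p ∈ antidiagonal m, g p.1 * g p.2 ≤
      (g p.1 + g p.2 + 2 * ((m + 1 : ℕ) : ℝ)⁻¹) / ((m + 2 : ℕ) : ℝ) ^ 2 := by
    rintro ⟨a, b⟩ hab
    rw [HasAntidiagonal.mem_antidiagonal] at hab
    have hd : ((m + 2 : ℕ) : ℝ) = ((a + 1 : ℕ) : ℝ) + ((b + 1 : ℕ) : ℝ) := by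
      rw [← hab]; push_cast; ring
    -- `(a + 1)(b + 1) = ab + m + 1`
    have hprod : ((m + 1 : ℕ) : ℝ) ≤ ((a + 1 : ℕ) : ℝ) * ((b + 1 : ℕ) : ℝ) := by
      rw [← hab]; push_cast
      nlinarith [mul_nonneg (Nat.cast_nonneg (α := ℝ) a) (Nat.cast_nonneg (α := ℝ) b)]
    simp only [g]
    rw [inv_sq_mul_inv_sq_eq (by positivity) (by positivity) (by positivity), hd]
    gcongr
  have hsum : ∑ p ∈ antidiagonal m, g p.1 ≤ 2 := by
    rw [Nat.sum_antidiagonal_eq_sum_range_succ_mk]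
    exact sum_range_inv_sq_succ_le_two (m + 1)
  have hsum' : ∑ p ∈ antidiagonal m, g p.2 ≤ 2 := by
    rwa [← Nat.sum_antidiagonal_swap] at hsum
  calc ∑ p ∈ antidiagonal m, g p.1 * g p.2
      ≤ ∑ p ∈ antidiagonal m,
          (g p.1 + g p.2 + 2 * ((m + 1 : ℕ) : ℝ)⁻¹) / ((m + 2 : ℕ) : ℝ) ^ 2 := sum_le_sum hpoint
    _ = (∑ p ∈ antidiagonal m, g p.1 + ∑ p ∈ antidiagonal m, g p.2 + 2) /
          ((m + 2 : ℕ) : ℝ) ^ 2 := by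
        rw [← sum_div, sum_add_distrib, sum_add_distrib, sum_const, Nat.card_antidiagonal,
          nsmul_eq_mul, mul_left_comm, mul_inv_cancel₀ (by positivity), mul_one]
    _ ≤ 6 / ((m + 2 : ℕ) : ℝ) ^ 2 := by gcongr; linarith

/-- Parts `n = 0` are omitted from the product in the theorem, hence weight `1`. -/
noncomputable def invSqWeight (n : ℕ) : ℝ :=
  if n = 0 then 1 else ((n : ℝ) ^ 2)⁻¹

theorem invSqWeight_nonneg (n : ℕ) : 0 ≤ invSqWeight n := by
  unfold invSqWeight; split_ifs <;> positivity

theorem sum_antidiagonal_invSqWeight_mul_le (n : ℕ) :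
    ∑ p ∈ antidiagonal n, invSqWeight p.1 * invSqWeight p.2 ≤ 8 * invSqWeight n := by
  match n with
  | 0 => norm_num [invSqWeight]
  | 1 => norm_num [invSqWeight, Nat.antidiagonal_succ]
  | m + 2 =>
    have hinner := sum_antidiagonal_inv_sq_succ_mul_le m
    simp only [Nat.antidiagonal_succ_succ', sum_cons, sum_map, Function.Embedding.coe_prodMap,
      Prod.map, Function.Embedding.coeFn_mk, Nat.succ_eq_add_one, invSqWeight,
      Nat.add_one_ne_zero, if_false, if_true] at hinner ⊢
    linarith [show 2 * (((m + 2 : ℕ) : ℝ) ^ 2)⁻¹ + 6 / ((m + 2 : ℕ) : ℝ) ^ 2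
      = 8 * (((m + 2 : ℕ) : ℝ) ^ 2)⁻¹ by ring]

theorem ite_zpow_sub_two_le {x d : ℕ} (c : ℕ) (hd : 1 ≤ d) (hx : x ≤ d) :
    (if x ≠ 0 then (x : ℝ) ^ ((c : ℤ) - 2) else 1) ≤ (d : ℝ) ^ c * invSqWeight x := by
  by_cases h0 : x = 0
  · simpa [h0, invSqWeight] using one_le_pow₀ (M₀ := ℝ) (Nat.one_le_cast.mpr hd)
  · rw [if_pos h0, invSqWeight, if_neg h0, zpow_sub₀ (by positivity), zpow_natCast,
      zpow_two, ← sq, div_eq_mul_inv]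
    gcongr

theorem prod_filter_zpow_sub_two_le {ι : Type*} [Fintype ι] (χ f : ι → ℕ) {d : ℕ} (hd : 1 ≤ d)
    (hf : ∀ i, f i ≤ d) :
    ∏ i ∈ univ.filter (fun i => f i ≠ 0), (f i : ℝ) ^ ((χ i : ℤ) - 2)
      ≤ (d : ℝ) ^ (∑ i, χ i) * ∏ i, invSqWeight (f i) := by
  rw [prod_filter, ← prod_pow_eq_pow_sum, ← prod_mul_distrib]
  exact prod_le_prod (fun i _ => by split_ifs <;> positivity)
    fun i _ => ite_zpow_sub_two_le (χ i) hd (hf i)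

theorem stmt_16_general (L d : ℕ) (hd : 1 ≤ d) (χ : Fin (L + 1) → ℕ) :
    ∑ f ∈ Finset.Nat.antidiagonalTuple (L + 1) d,
        ∏ i ∈ Finset.univ.filter (fun i => f i ≠ 0), (f i : ℝ) ^ ((χ i : ℤ) - 2)
      ≤ 8 ^ L * (d : ℝ) ^ ((∑ i, χ i : ℤ) - 2) := by
  have hpart : ∀ f ∈ Nat.antidiagonalTuple (L + 1) d, ∀ i, f i ≤ d := fun f hf i =>
    Nat.mem_antidiagonalTuple.mp hf ▸ single_le_sum (fun j _ => Nat.zero_le (f j)) (mem_univ i)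
  calc _ ≤ ∑ f ∈ Nat.antidiagonalTuple (L + 1) d, (d : ℝ) ^ (∑ i, χ i) * ∏ i, invSqWeight (f i) :=
        sum_le_sum fun f hf => prod_filter_zpow_sub_two_le χ f hd (hpart f hf)
    _ = (d : ℝ) ^ (∑ i, χ i) * ∑ f ∈ Nat.antidiagonalTuple (L + 1) d, ∏ i, invSqWeight (f i) :=
        (mul_sum _ _ _).symm
    _ ≤ (d : ℝ) ^ (∑ i, χ i) * (8 ^ L * invSqWeight d) := by
        gcongr
        exact Nat.sum_antidiagonalTuple_prod_le invSqWeight_nonneg (by norm_num)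
          sum_antidiagonal_invSqWeight_mul_le L d
    _ = 8 ^ L * (d : ℝ) ^ ((∑ i, χ i : ℤ) - 2) := by
        rw [invSqWeight, if_neg (by omega), zpow_sub₀ (by positivity), ← Nat.cast_sum,
          zpow_natCast, zpow_two, ← sq, div_eq_mul_inv]
        ring

/-- Composition-sum inequality: for `L ≥ 1`, `d ≥ 1` and nonnegative integers
`χ₀,…,χ_L`, the sum over compositions `d₀+⋯+d_L = d` of `∏_{dᵢ≠0} dᵢ^{χᵢ-2}` is at
most `8^L · d^{χ-2}` where `χ = ∑χᵢ`. -/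
theorem stmt_16 (L d : ℕ) (hL : 1 ≤ L) (hd : 1 ≤ d) (χ : Fin (L + 1) → ℕ) :
    ∑ f ∈ Finset.Nat.antidiagonalTuple (L + 1) d,
        ∏ i ∈ Finset.univ.filter (fun i => f i ≠ 0), (f i : ℝ) ^ ((χ i : ℤ) - 2)
      ≤ 8 ^ L * (d : ℝ) ^ ((∑ i, χ i : ℤ) - 2) :=
  stmt_16_general L d hd χ
end
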